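/- Let q ∈ [1,∞], K ≥ 1, n₁,…,n_K > 0, λ₁, λ₂ ≥ 0, let S¹,…,Sᴷ be symmetric p×p real matrices, let (I₁,…,I_L) be a partition of {1,…,p}, and let T = ∪_{l=1}^L I_l × I_l. If n_k|Sᵏ_{ij}| ≤ λ₁ for all (i,j) ∈ T^c and all k = 1,…,K, then every K-tuple (Θ̂¹,…,Θ̂ᴷ) of symmetric positive definite p×p matrices minimizing the CNJGL objective F(Θ¹,…,Θᴷ) = Σ_{k=1}^K n_k(−log det Θᵏ + trace(SᵏΘᵏ)) + λ₁ Σ_{k=1}^K Σ_{i,j}|Θᵏ_{ij}| + λ₂ Ω_q(Θ¹ − diag(Θ¹),…,Θᴷ − diag(Θᴷ)) over all K-tuples of symmetric positive definite matrices has the property that each Θ̂ᵏ is supported on T. -/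

import Mathlib

open Matrix
open scoped ENNReal BigOperators

/-- The ℓ_q norm of a finitely-indexed real vector, for q ∈ [0,∞]
(the maximum absolute entry when q = ∞). -/
noncomputable def lqNorm (q : ℝ≥0∞) {ι : Type*} [Fintype ι] (x : ι → ℝ) : ℝ :=
  ‖(WithLp.equiv q (ι → ℝ)).symm x‖

/-- The row-column overlap norm Ω_q of a K-tuple of p×p real matrices:
the infimum of Σ_j ‖([V¹;…;Vᴷ])_j‖_q over all decompositions Θᵏ = Vᵏ + (Vᵏ)ᵀ. -/
noncomputable def rcon (q : ℝ≥0∞) (K p : ℕ)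
    (Θ : Fin K → Matrix (Fin p) (Fin p) ℝ) : ℝ :=
  sInf { r : ℝ | ∃ V : Fin K → Matrix (Fin p) (Fin p) ℝ,
    (∀ k, Θ k = V k + (V k)ᵀ) ∧
    r = ∑ j : Fin p, lqNorm q (fun ki : Fin K × Fin p => V ki.1 ki.2 j) }

/-- The row-column overlap norm Ω_q of a single p×p matrix (the case K = 1). -/
noncomputable def rcon1 (q : ℝ≥0∞) {p : ℕ} (Θ : Matrix (Fin p) (Fin p) ℝ) : ℝ :=
  sInf { r : ℝ | ∃ V : Matrix (Fin p) (Fin p) ℝ,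
    Θ = V + Vᵀ ∧ r = ∑ j : Fin p, lqNorm q (fun i => V i j) }

/-- The CNJGL objective for K precision matrices:
Σ_k n_k(−log det Θᵏ + trace(SᵏΘᵏ)) + λ₁ Σ_k Σ_{i,j}|Θᵏ_{ij}|
  + λ₂ Ω_q(Θ¹ − diag(Θ¹),…,Θᴷ − diag(Θᴷ)). -/
noncomputable def cnjglObj {K p : ℕ} (q : ℝ≥0∞) (n : Fin K → ℝ)
    (lam₁ lam₂ : ℝ) (S : Fin K → Matrix (Fin p) (Fin p) ℝ)
    (Θ : Fin K → Matrix (Fin p) (Fin p) ℝ) : ℝ :=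
  (∑ k : Fin K, n k * (-Real.log (Θ k).det + (S k * Θ k).trace))
    + lam₁ * (∑ k : Fin K, ∑ i : Fin p, ∑ j : Fin p, |Θ k i j|)
    + lam₂ * rcon q K p (fun k => Θ k - Matrix.diagonal fun i => Θ k i i)

/-! Replacing each `Θᵏ` by its block-diagonal part `Θ̃ᵏ` (the entries outside `T` set to zero)
keeps it positive definite and does not increase the objective: the trace and `ℓ₁` terms do not
grow because `n_k |Sᵏᵢⱼ| ≤ λ₁` off `T`, the overlap norm does not grow because truncating a
decomposition `Θᵏ = Vᵏ + (Vᵏ)ᵀ` gives one of `Θ̃ᵏ` with smaller columns, and `-log det` drops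
strictly unless `Θᵏ = Θ̃ᵏ` (Fischer's inequality). The latter is the tangent-line bound
`log det A - log det B ≤ tr (A B⁻¹) - p`, strict unless `A = B`, of the concave function `log det`:
since `(Θ̃ᵏ)⁻¹` is again block diagonal, `tr (Θᵏ (Θ̃ᵏ)⁻¹) = tr (Θ̃ᵏ (Θ̃ᵏ)⁻¹) = p`. Hence a minimizer
is block diagonal. -/

section lqNorm

variable {q : ℝ≥0∞} {ι : Type*} [Fintype ι]

lemma lqNorm_nonneg (hq : 1 ≤ q) (x : ι → ℝ) : 0 ≤ lqNorm q x :=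
  haveI : Fact (1 ≤ q) := ⟨hq⟩
  norm_nonneg _

lemma lqNorm_mono (hq : 1 ≤ q) {x y : ι → ℝ} (h : ∀ i, |x i| ≤ |y i|) :
    lqNorm q x ≤ lqNorm q y := by
  unfold lqNorm
  rcases eq_or_ne q ∞ with rfl | hq'
  · rw [PiLp.norm_eq_ciSup, PiLp.norm_eq_ciSup]
    cases isEmpty_or_nonempty ι
    · simp
    · exact ciSup_mono (Set.finite_range _).bddAbove fun i => by simpa using h i
  · have hq0 : 0 < q.toReal := ENNReal.toReal_pos (by positivity) hq'
    rw [PiLp.norm_eq_sum hq0, PiLp.norm_eq_sum hq0]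
    gcongr with i
    simpa using h i

end lqNorm

namespace Matrix

section BlockRestrict

variable {n β R : Type*} [DecidableEq β]

/-- The block-diagonal part of `M` for the partition of `n` into the fibres of `b`. -/
def blockRestrict [Zero R] (b : n → β) (M : Matrix n n R) : Matrix n n R :=
  of fun i j => if b i = b j then M i j else 0

def blockProj [Zero R] [One R] [DecidableEq n] (b : n → β) (c : β) : Matrix n n R :=
  diagonal fun i => if b i = c then 1 else 0

variable [Semiring R] (b : n → β)

@[simp] lemma blockRestrict_apply (M : Matrix n n R) (i j : n) :
    blockRestrict b M i j = if b i = b j then M i j else 0 := rfl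

lemma blockRestrict_blockRestrict (M : Matrix n n R) :
    blockRestrict b (blockRestrict b M) = blockRestrict b M := by
  ext i j; by_cases h : b i = b j <;> simp [h]

lemma blockRestrict_add (M N : Matrix n n R) :
    blockRestrict b (M + N) = blockRestrict b M + blockRestrict b N := by
  ext i j; by_cases h : b i = b j <;> simp [h]

lemma blockRestrict_transpose (M : Matrix n n R) :
    blockRestrict b Mᵀ = (blockRestrict b M)ᵀ := by
  ext i j; simp [eq_comm]

lemma blockRestrict_conjTranspose [StarRing R] (M : Matrix n n R) :
    blockRestrict b Mᴴ = (blockRestrict b M)ᴴ := by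
  ext i j
  by_cases h : b i = b j
  · simp [h]
  · simp [h, Ne.symm h]

lemma blockRestrict_sub_diagonal {R : Type*} [Ring R] [DecidableEq n] (M : Matrix n n R) :
    blockRestrict b (M - diagonal fun i => M i i)
      = blockRestrict b M - diagonal fun i => blockRestrict b M i i := by
  ext i j
  by_cases h : i = j
  · subst h; simp
  · by_cases hb : b i = b j <;> simp [h, hb]

lemma blockRestrict_one [DecidableEq n] : blockRestrict b (1 : Matrix n n R) = 1 := by
  ext i j
  by_cases h : i = j
  · subst h; simp
  · simp [one_apply_ne h]

lemma blockProj_conjTranspose [StarRing R] [DecidableEq n] (c : β) :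
    (blockProj b c : Matrix n n R)ᴴ = blockProj b c := by
  ext i j
  by_cases h : i = j
  · subst h; by_cases hc : b i = c <;> simp [blockProj, hc]
  · simp [blockProj, h, Ne.symm h]

variable [Fintype n]

lemma blockRestrict_eq_sum [DecidableEq n] (M : Matrix n n R) :
    blockRestrict b M = ∑ c ∈ Finset.univ.image b, blockProj b c * M * blockProj b c := by
  ext i j
  simp only [blockRestrict_apply, blockProj, sum_apply, diagonal_mul, mul_diagonal]
  by_cases h : b i = b j <;> simp [h]

lemma blockRestrict_mul_blockRestrict (M N : Matrix n n R) :
    blockRestrict b M * blockRestrict b N = blockRestrict b (blockRestrict b M * N) := by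
  ext i j
  simp only [mul_apply, blockRestrict_apply]
  by_cases h : b i = b j
  · simp only [h, if_true]
    refine Finset.sum_congr rfl fun k _ => ?_
    by_cases hk : b j = b k <;> simp [hk, eq_comm]
  · simp only [h, if_false]
    refine Finset.sum_eq_zero fun k _ => ?_
    by_cases hk : b i = b k
    · simp [hk, show b k ≠ b j from hk ▸ h]
    · simp [hk]

lemma trace_mul_blockRestrict (M N : Matrix n n R) :
    (M * blockRestrict b N).trace = (blockRestrict b M * N).trace := by
  simp only [trace, diag_apply, mul_apply, blockRestrict_apply]
  refine Finset.sum_congr rfl fun i _ => Finset.sum_congr rfl fun k _ => ?_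
  by_cases h : b i = b k <;> simp [h, eq_comm]

variable [DecidableEq n]

lemma inv_blockRestrict {K : Type*} [Field K] (M : Matrix n n K)
    (hM : IsUnit (blockRestrict b M)) :
    blockRestrict b (blockRestrict b M)⁻¹ = (blockRestrict b M)⁻¹ := by
  refine (inv_eq_right_inv ?_).symm
  rw [← blockRestrict_blockRestrict b M, blockRestrict_mul_blockRestrict,
    blockRestrict_blockRestrict, mul_nonsing_inv _ ((isUnit_iff_isUnit_det _).mp hM),
    blockRestrict_one]

lemma trace_mul_inv_blockRestrict {K : Type*} [Field K] (M : Matrix n n K)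
    (hM : IsUnit (blockRestrict b M)) :
    (M * (blockRestrict b M)⁻¹).trace = Fintype.card n := by
  rw [← inv_blockRestrict b M hM, trace_mul_blockRestrict,
    mul_nonsing_inv _ ((isUnit_iff_isUnit_det _).mp hM), trace_one]

open scoped ComplexOrder in
lemma PosDef.blockRestrict {𝕜 : Type*} [RCLike 𝕜] {M : Matrix n n 𝕜} (hM : M.PosDef) :
    (blockRestrict b M).PosDef := by
  refine .of_dotProduct_mulVec_pos ?_ fun x hx => ?_
  · rw [IsHermitian, ← blockRestrict_conjTranspose, hM.1.eq]
  have hquad : star x ⬝ᵥ (Matrix.blockRestrict b M *ᵥ x)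
      = ∑ c ∈ Finset.univ.image b, star (blockProj b c *ᵥ x) ⬝ᵥ (M *ᵥ (blockProj b c *ᵥ x)) := by
    rw [blockRestrict_eq_sum, sum_mulVec, dotProduct_sum]
    refine Finset.sum_congr rfl fun c _ => ?_
    simp only [star_mulVec, dotProduct_mulVec, vecMul_vecMul, mulVec_mulVec,
      blockProj_conjTranspose, mul_assoc]
  obtain ⟨i, hi⟩ := Function.ne_iff.mp hx
  rw [hquad]
  refine Finset.sum_pos' (fun c _ => hM.posSemidef.dotProduct_mulVec_nonneg _)
    ⟨b i, Finset.mem_image_of_mem b (Finset.mem_univ i), hM.dotProduct_mulVec_pos ?_⟩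
  exact Function.ne_iff.mpr ⟨i, by simpa [blockProj, mulVec_diagonal] using hi⟩

end BlockRestrict

section LogDet

variable {n : Type*} [Fintype n] [DecidableEq n] {A B M : Matrix n n ℝ}

lemma PosDef.log_det_eq_sum_log_eigenvalues (hM : M.PosDef) :
    Real.log M.det = ∑ i, Real.log (hM.1.eigenvalues i) := by
  simp only [hM.1.det_eq_prod_eigenvalues, RCLike.ofReal_real_eq_id, id]
  exact Real.log_prod fun i _ => (hM.eigenvalues_pos i).ne'

lemma PosDef.trace_sub_card_eq_sum (hM : M.PosDef) :
    M.trace - Fintype.card n = ∑ i, (hM.1.eigenvalues i - 1) := by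
  simp [hM.1.trace_eq_sum_eigenvalues]

lemma PosDef.log_det_le_trace_sub_card (hM : M.PosDef) :
    Real.log M.det ≤ M.trace - Fintype.card n := by
  rw [hM.log_det_eq_sum_log_eigenvalues, hM.trace_sub_card_eq_sum]
  exact Finset.sum_le_sum fun i _ => Real.log_le_sub_one_of_pos (hM.eigenvalues_pos i)

lemma PosDef.log_det_lt_trace_sub_card (hM : M.PosDef) (h : M ≠ 1) :
    Real.log M.det < M.trace - Fintype.card n := by
  obtain ⟨i, hi⟩ : ∃ i, hM.1.eigenvalues i ≠ 1 := by
    by_contra! hall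
    refine h ?_
    rw [hM.1.spectral_theorem, show (RCLike.ofReal ∘ hM.1.eigenvalues : n → ℝ) = fun _ => 1 from
      funext fun i => by simp [hall i], diagonal_one, map_one]
  rw [hM.log_det_eq_sum_log_eigenvalues, hM.trace_sub_card_eq_sum]
  exact Finset.sum_lt_sum (fun i _ => Real.log_le_sub_one_of_pos (hM.eigenvalues_pos i))
    ⟨i, Finset.mem_univ i, Real.log_lt_sub_one_of_pos (hM.eigenvalues_pos i) hi⟩

open scoped MatrixOrder in
/-- The witness is `R A Rᴴ`, where `B⁻¹ = Rᴴ R`. -/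
lemma PosDef.exists_posDef_log_det_eq_sub (hA : A.PosDef) (hB : B.PosDef) :
    ∃ M : Matrix n n ℝ, M.PosDef ∧ Real.log M.det = Real.log A.det - Real.log B.det ∧
      M.trace = (A * B⁻¹).trace ∧ (M = 1 → A = B) := by
  obtain ⟨R, hR⟩ := CStarAlgebra.nonneg_iff_eq_star_mul_self.mp hB.inv.posSemidef.nonneg
  have hRu : IsUnit R := by
    have := hB.inv.isUnit
    rw [hR] at this
    exact isUnit_of_mul_isUnit_right this
  refine ⟨R * A * star R, hRu.posDef_star_right_conjugate_iff.mpr hA, ?_, ?_, fun h1 => ?_⟩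
  · have hdet : (star R).det * R.det = B.det⁻¹ := by
      rw [← det_mul, ← hR, det_nonsing_inv, Ring.inverse_eq_inv']
    rw [det_mul, det_mul, mul_assoc, mul_comm R.det, mul_assoc, hdet,
      Real.log_mul hA.det_pos.ne' (inv_ne_zero hB.det_pos.ne'), Real.log_inv, sub_eq_add_neg]
  · rw [trace_mul_comm, ← mul_assoc, ← hR, trace_mul_comm]
  · have hAB : A * B⁻¹ = 1 := by
      rw [mul_assoc, mul_eq_one_comm] at h1
      rw [hR, ← mul_assoc, h1]
    rw [← inv_eq_left_inv hAB, nonsing_inv_nonsing_inv _ ((isUnit_iff_isUnit_det B).mp hB.isUnit)]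

lemma PosDef.log_det_sub_log_det_le (hA : A.PosDef) (hB : B.PosDef) :
    Real.log A.det - Real.log B.det ≤ (A * B⁻¹).trace - Fintype.card n := by
  obtain ⟨M, hM, hdet, htr, -⟩ := hA.exists_posDef_log_det_eq_sub hB
  rw [← hdet, ← htr]
  exact hM.log_det_le_trace_sub_card

lemma PosDef.log_det_sub_log_det_lt (hA : A.PosDef) (hB : B.PosDef) (hAB : A ≠ B) :
    Real.log A.det - Real.log B.det < (A * B⁻¹).trace - Fintype.card n := by
  obtain ⟨M, hM, hdet, htr, hM1⟩ := hA.exists_posDef_log_det_eq_sub hB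
  rw [← hdet, ← htr]
  exact hM.log_det_lt_trace_sub_card (mt hM1 hAB)

variable {β : Type*} [DecidableEq β] (b : n → β)

lemma log_det_le_log_det_blockRestrict (hA : A.PosDef) :
    Real.log A.det ≤ Real.log (blockRestrict b A).det := by
  have hAb := hA.blockRestrict b
  have := hA.log_det_sub_log_det_le hAb
  rw [trace_mul_inv_blockRestrict b A hAb.isUnit, sub_self] at this
  linarith

lemma log_det_lt_log_det_blockRestrict (hA : A.PosDef) (h : blockRestrict b A ≠ A) :
    Real.log A.det < Real.log (blockRestrict b A).det := by
  have hAb := hA.blockRestrict b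
  have := hA.log_det_sub_log_det_lt hAb (Ne.symm h)
  rw [trace_mul_inv_blockRestrict b A hAb.isUnit, sub_self] at this
  linarith

end LogDet

lemma trace_mul_add_sum_abs_eq {n : Type*} [Fintype n] (S M : Matrix n n ℝ) (lam : ℝ) :
    (S * M).trace + lam * ∑ i, ∑ j, |M i j| = ∑ i, ∑ j, (S i j * M j i + lam * |M j i|) := by
  rw [Finset.sum_comm (f := fun i j => |M i j|)]
  simp only [trace, diag_apply, mul_apply, Finset.mul_sum, ← Finset.sum_add_distrib]

lemma trace_mul_blockRestrict_add_le {n β : Type*} [Fintype n] [DecidableEq β] (b : n → β)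
    {S : Matrix n n ℝ} {lam : ℝ} (hS : ∀ i j, b i ≠ b j → |S i j| ≤ lam) (M : Matrix n n ℝ) :
    (S * blockRestrict b M).trace + lam * ∑ i, ∑ j, |blockRestrict b M i j|
      ≤ (S * M).trace + lam * ∑ i, ∑ j, |M i j| := by
  rw [trace_mul_add_sum_abs_eq, trace_mul_add_sum_abs_eq]
  refine Finset.sum_le_sum fun i _ => Finset.sum_le_sum fun j _ => ?_
  by_cases h : b j = b i
  · simp [h]
  · have hSM : -(lam * |M j i|) ≤ S i j * M j i :=
      calc -(lam * |M j i|) ≤ -|S i j * M j i| := by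
            rw [abs_mul, neg_le_neg_iff]
            exact mul_le_mul_of_nonneg_right (hS i j (Ne.symm h)) (abs_nonneg _)
        _ ≤ S i j * M j i := neg_abs_le _
    simp only [blockRestrict_apply, h, if_false, mul_zero, abs_zero, add_zero]
    linarith

end Matrix

lemma rcon_blockRestrict_le {K p : ℕ} {q : ℝ≥0∞} (hq : 1 ≤ q) {β : Type*} [DecidableEq β]
    (b : Fin p → β) {Θ : Fin K → Matrix (Fin p) (Fin p) ℝ} (hΘ : ∀ k, (Θ k).IsSymm) :
    rcon q K p (fun k => blockRestrict b (Θ k)) ≤ rcon q K p Θ := by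
  refine le_csInf ⟨_, fun k => (1 / 2 : ℝ) • Θ k, fun k => ?_, rfl⟩ ?_
  · rw [transpose_smul, (hΘ k).eq, ← add_smul]
    norm_num
  rintro r ⟨V, hV, rfl⟩
  calc rcon q K p (fun k => blockRestrict b (Θ k))
      ≤ ∑ j, lqNorm q (fun ki : Fin K × Fin p => blockRestrict b (V ki.1) ki.2 j) := by
        refine csInf_le ⟨0, ?_⟩ ⟨fun k => blockRestrict b (V k), fun k => ?_, rfl⟩
        · rintro r ⟨W, -, rfl⟩
          exact Finset.sum_nonneg fun j _ => lqNorm_nonneg hq _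
        · simp only [hV k, blockRestrict_add, blockRestrict_transpose]
    _ ≤ ∑ j, lqNorm q (fun ki : Fin K × Fin p => V ki.1 ki.2 j) := by
        refine Finset.sum_le_sum fun j _ => lqNorm_mono hq fun ki => ?_
        by_cases h : b ki.2 = b j <;> simp [h]

lemma cnjglObj_blockRestrict_lt {K p : ℕ} {q : ℝ≥0∞} (hq : 1 ≤ q) {n : Fin K → ℝ}
    (hn : ∀ k, 0 < n k) {lam₁ lam₂ : ℝ} (hlam₂ : 0 ≤ lam₂) {β : Type*} [DecidableEq β]
    (b : Fin p → β) {S : Fin K → Matrix (Fin p) (Fin p) ℝ}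
    (hS : ∀ k i j, b i ≠ b j → n k * |S k i j| ≤ lam₁)
    {Θ : Fin K → Matrix (Fin p) (Fin p) ℝ} (hΘ : ∀ k, (Θ k).PosDef)
    (hne : ∃ k, blockRestrict b (Θ k) ≠ Θ k) :
    cnjglObj q n lam₁ lam₂ S (fun k => blockRestrict b (Θ k)) < cnjglObj q n lam₁ lam₂ S Θ := by
  set f : Fin K → Matrix (Fin p) (Fin p) ℝ → ℝ := fun k N =>
    n k * (-Real.log N.det + (S k * N).trace) + lam₁ * ∑ i, ∑ j, |N i j| with hf
  have hobj : ∀ Ψ, cnjglObj q n lam₁ lam₂ S Ψ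
      = ∑ k, f k (Ψ k) + lam₂ * rcon q K p (fun k => Ψ k - diagonal fun i => Ψ k i i) := by
    intro Ψ
    simp only [cnjglObj, hf, Finset.sum_add_distrib, Finset.mul_sum]
  have hlinear : ∀ k, n k * (S k * blockRestrict b (Θ k)).trace
        + lam₁ * ∑ i, ∑ j, |blockRestrict b (Θ k) i j|
      ≤ n k * (S k * Θ k).trace + lam₁ * ∑ i, ∑ j, |Θ k i j| := by
    intro k
    have hnS : ∀ i j, b i ≠ b j → |(n k • S k) i j| ≤ lam₁ := fun i j h => by
      simpa [abs_mul, abs_of_pos (hn k)] using hS k i j h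
    simpa [smul_mul, trace_smul] using trace_mul_blockRestrict_add_le b hnS (Θ k)
  have hsum : ∑ k, f k (blockRestrict b (Θ k)) < ∑ k, f k (Θ k) := by
    obtain ⟨k₀, hk₀⟩ := hne
    refine Finset.sum_lt_sum (fun k _ => ?_) ⟨k₀, Finset.mem_univ _, ?_⟩
    · have := mul_le_mul_of_nonneg_left (log_det_le_log_det_blockRestrict b (hΘ k)) (hn k).le
      simp only [hf]
      linarith [hlinear k]
    · have := mul_lt_mul_of_pos_left (log_det_lt_log_det_blockRestrict b (hΘ k₀) hk₀) (hn k₀)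
      simp only [hf]
      linarith [hlinear k₀]
  have hrcon :
      rcon q K p (fun k => blockRestrict b (Θ k) - diagonal fun i => blockRestrict b (Θ k) i i)
      ≤ rcon q K p (fun k => Θ k - diagonal fun i => Θ k i i) := by
    simp only [← blockRestrict_sub_diagonal]
    refine rcon_blockRestrict_le hq b fun k => ?_
    rw [IsSymm, transpose_sub, (isHermitian_iff_isSymm.mp (hΘ k).1).eq, diagonal_transpose]
  rw [hobj, hobj]
  linarith [mul_le_mul_of_nonneg_left hrcon hlam₂]

theorem cnjgl_sufficient_general (K p L : ℕ) (q : ℝ≥0∞) (hq : 1 ≤ q)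
    (n : Fin K → ℝ) (hn : ∀ k, 0 < n k)
    (lam₁ lam₂ : ℝ) (hlam₂ : 0 ≤ lam₂)
    (S : Fin K → Matrix (Fin p) (Fin p) ℝ)
    (I : Fin L → Finset (Fin p)) (hpart : ∀ i : Fin p, ∃! l, i ∈ I l)
    (hcond : ∀ k, ∀ i j : Fin p, ¬ (∃ l, i ∈ I l ∧ j ∈ I l) →
      n k * |S k i j| ≤ lam₁)
    (Θ : Fin K → Matrix (Fin p) (Fin p) ℝ) (hΘ : ∀ k, (Θ k).PosDef)
    (hmin : ∀ Ψ : Fin K → Matrix (Fin p) (Fin p) ℝ, (∀ k, (Ψ k).PosDef) →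
      cnjglObj q n lam₁ lam₂ S Θ ≤ cnjglObj q n lam₁ lam₂ S Ψ) :
    ∀ k, ∀ i j : Fin p, ¬ (∃ l, i ∈ I l ∧ j ∈ I l) → Θ k i j = 0 := by
  choose b hb using fun i => (hpart i).exists
  have hblock : ∀ i j, (∃ l, i ∈ I l ∧ j ∈ I l) ↔ b i = b j := fun i j =>
    ⟨fun ⟨_, hi, hj⟩ => ((hpart i).unique (hb i) hi).trans ((hpart j).unique hj (hb j)),
      fun h => ⟨b i, hb i, h ▸ hb j⟩⟩
  simp only [hblock] at hcond ⊢
  intro k i j hij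
  by_contra hΘij
  have hne : ∃ k, blockRestrict b (Θ k) ≠ Θ k :=
    ⟨k, fun h => hΘij (by rw [← h, blockRestrict_apply, if_neg hij])⟩
  exact (cnjglObj_blockRestrict_lt hq hn hlam₂ b hcond hΘ hne).not_ge
    (hmin _ fun k => (hΘ k).blockRestrict b)

/-- Theorem 5, sufficient condition for CNJGL: if
n_k|Sᵏ_{ij}| ≤ λ₁ for all (i,j) ∈ T^c and all k, where T = ∪_l I_l × I_l for a
partition (I_l), then every K-tuple of symmetric positive definite matrices
minimizing the CNJGL objective is supported on T. -/
theorem cnjgl_sufficient (K p L : ℕ) (hK : 1 ≤ K) (q : ℝ≥0∞) (hq : 1 ≤ q)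
    (n : Fin K → ℝ) (hn : ∀ k, 0 < n k)
    (lam₁ lam₂ : ℝ) (hlam₁ : 0 ≤ lam₁) (hlam₂ : 0 ≤ lam₂)
    (S : Fin K → Matrix (Fin p) (Fin p) ℝ) (hS : ∀ k, (S k).IsSymm)
    (I : Fin L → Finset (Fin p)) (hpart : ∀ i : Fin p, ∃! l, i ∈ I l)
    (hcond : ∀ k, ∀ i j : Fin p, ¬ (∃ l, i ∈ I l ∧ j ∈ I l) →
      n k * |S k i j| ≤ lam₁)
    (Θ : Fin K → Matrix (Fin p) (Fin p) ℝ) (hΘ : ∀ k, (Θ k).PosDef)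
    (hmin : ∀ Ψ : Fin K → Matrix (Fin p) (Fin p) ℝ, (∀ k, (Ψ k).PosDef) →
      cnjglObj q n lam₁ lam₂ S Θ ≤ cnjglObj q n lam₁ lam₂ S Ψ) :
    ∀ k, ∀ i j : Fin p, ¬ (∃ l, i ∈ I l ∧ j ∈ I l) → Θ k i j = 0 :=
  cnjgl_sufficient_general K p L q hq n hn lam₁ lam₂ hlam₂ S I hpart hcond Θ hΘ hmin
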